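/- Sharpness example: Let A = Iₙ (the n × n identity), b = 0, x = 0, and r = (1,…,1). Then R = n, γ = 1, and for the noisy randomized Kaczmarz iterates x*_k run on Ax ≈ b + r (i.e., each step projects onto {z : z_i = 1} for a uniformly random i), 𝔼‖x*_k - x‖ ≥ √R − (1 − 1/R)^{k/2} ‖x₀ − r‖, where r = (1,…,1). In particular, the limiting expected error is at least √R = √n = √R γ. -/

import Mathlib

open Finset

/-- Euclidean norm on `Fin k → ℝ`. -/
noncomputable def enorm' {k : ℕ} (v : Fin k → ℝ) : ℝ := Real.sqrt (∑ j, v j ^ 2)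

/-- Standard inner product on `Fin k → ℝ`. -/
noncomputable def ip {k : ℕ} (v w : Fin k → ℝ) : ℝ := ∑ j, v j * w j

/-- Frobenius norm of a matrix. -/
noncomputable def frob {m n : ℕ} (A : Matrix (Fin m) (Fin n) ℝ) : ℝ :=
  Real.sqrt (∑ i, ∑ j, A i j ^ 2)

/-- `‖A⁻¹‖ = inf {M : M‖Az‖ ≥ ‖z‖ for all z}`. -/
noncomputable def invNorm {m n : ℕ} (A : Matrix (Fin m) (Fin n) ℝ) : ℝ :=
  sInf {M : ℝ | ∀ z : Fin n → ℝ, enorm' z ≤ M * enorm' (A.mulVec z)}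

/-- Kaczmarz iteration driven by a list of row indices (head = last step):
each step orthogonally projects onto the hyperplane `{z : ⟨a_i, z⟩ = c i}`. -/
noncomputable def kIter {m n : ℕ} (A : Matrix (Fin m) (Fin n) ℝ) (c : Fin m → ℝ)
    (x0 : Fin n → ℝ) : List (Fin m) → (Fin n → ℝ)
  | [] => x0
  | i :: l => kIter A c x0 l + ((c i - ip (A i) (kIter A c x0 l)) / enorm' (A i) ^ 2) • A i

/-!
For `A = Iₙ` a Kaczmarz step on row `i` just overwrites coordinate `i` by `c i`, so after the
steps `f : Fin k → Fin n` the error `x_k - c` is `x₀ - c` with the visited coordinates zeroed.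
A coordinate is never visited with probability `(1 - 1/n)^k`, hence
`𝔼‖x_k - c‖² = (1 - 1/n)^k ‖x₀ - c‖²`, and Jensen bounds `𝔼‖x_k - c‖` by its square root.
The triangle inequality `‖c‖ ≤ ‖x_k‖ + ‖x_k - c‖` then gives the lower bound on `𝔼‖x_k‖`,
with `‖c‖ = √n` for `c = (1,…,1)`.
-/

lemma enorm'_nonneg {k : ℕ} (v : Fin k → ℝ) : 0 ≤ enorm' v := Real.sqrt_nonneg _

lemma enorm'_eq_norm {k : ℕ} (v : Fin k → ℝ) : enorm' v = ‖WithLp.toLp 2 v‖ := by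
  simp [enorm', EuclideanSpace.norm_eq]

lemma enorm'_le_enorm'_add_enorm'_sub {k : ℕ} (v w : Fin k → ℝ) :
    enorm' w ≤ enorm' v + enorm' (v - w) := by
  simpa only [enorm'_eq_norm, WithLp.toLp_sub] using
    norm_le_norm_add_norm_sub (WithLp.toLp 2 v) (WithLp.toLp 2 w)

lemma kIter_one_apply {n : ℕ} (c x0 : Fin n → ℝ) (l : List (Fin n)) (j : Fin n) :
    kIter (1 : Matrix (Fin n) (Fin n) ℝ) c x0 l j = if j ∈ l then c j else x0 j := by
  induction l with
  | nil => simp [kIter]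
  | cons i l ih =>
    have hrow : (1 : Matrix (Fin n) (Fin n) ℝ) i = Pi.single i 1 := by
      ext j; simp [Matrix.one_apply, Pi.single_apply, eq_comm]
    have hnorm : enorm' (Pi.single i 1 : Fin n → ℝ) = 1 := by
      simp [enorm', Pi.single_apply]
    have hip (v : Fin n → ℝ) : ip (Pi.single i 1) v = v i := by
      simp [ip, Pi.single_apply]
    rcases eq_or_ne j i with rfl | hji
    · simp [kIter, hrow, hnorm, hip]
    · simp [kIter, hrow, hji, ih]

lemma sq_enorm'_kIter_one_sub {n : ℕ} (c x0 : Fin n → ℝ) (l : List (Fin n)) :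
    enorm' (kIter (1 : Matrix (Fin n) (Fin n) ℝ) c x0 l - c) ^ 2
      = ∑ j, if j ∈ l then 0 else (x0 j - c j) ^ 2 := by
  rw [enorm', Real.sq_sqrt (by positivity)]
  refine sum_congr rfl fun j _ => ?_
  rw [Pi.sub_apply, kIter_one_apply]
  split_ifs <;> simp

lemma sum_ite_forall_ne_eq_pow {α : Type*} [Fintype α] [DecidableEq α] (a : α) (k : ℕ) :
    ∑ f : Fin k → α, (if ∀ i, f i ≠ a then (1 / Fintype.card α : ℝ) ^ k else 0)
      = (1 - 1 / Fintype.card α : ℝ) ^ k := by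
  have hpos : 0 < Fintype.card α := Fintype.card_pos_iff.mpr ⟨a⟩
  have hcard : (Fintype.card α : ℝ) ≠ 0 := by positivity
  have hsum : ∑ b : α, (if b ≠ a then (1 / Fintype.card α : ℝ) else 0)
      = 1 - 1 / Fintype.card α := by
    rw [← sum_filter, sum_const, filter_ne' univ a, card_erase_of_mem (mem_univ a),
      card_univ, nsmul_eq_mul, Nat.cast_pred hpos]
    field_simp
  rw [← hsum, Fintype.sum_pow]
  refine sum_congr rfl fun f _ => ?_
  rw [prod_ite_zero, prod_const, card_univ, Fintype.card_fin]
  simp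

lemma sum_pi_inv_card_pow {α : Type*} [Fintype α] [Nonempty α] (k : ℕ) :
    ∑ _f : Fin k → α, (1 / Fintype.card α : ℝ) ^ k = 1 := by
  rw [sum_const, card_univ, Fintype.card_fun, Fintype.card_fin, nsmul_eq_mul, Nat.cast_pow,
    ← mul_pow, mul_one_div_cancel (by positivity), one_pow]

lemma sum_mul_sqrt_le_sqrt_sum_mul {ι : Type*} (s : Finset ι) (w b : ι → ℝ)
    (hw : ∀ i ∈ s, 0 ≤ w i) (hw1 : ∑ i ∈ s, w i = 1) (hb : ∀ i ∈ s, 0 ≤ b i) :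
    ∑ i ∈ s, w i * √(b i) ≤ √(∑ i ∈ s, w i * b i) :=
  Real.strictConcaveOn_sqrt.concaveOn.le_map_sum hw hw1 hb

lemma sum_sq_enorm'_kIter_one_sub {n : ℕ} (c x0 : Fin n → ℝ) (k : ℕ) :
    ∑ f : Fin k → Fin n, (1 / n : ℝ) ^ k *
        enorm' (kIter (1 : Matrix (Fin n) (Fin n) ℝ) c x0 (List.ofFn f) - c) ^ 2
      = (1 - 1 / n : ℝ) ^ k * enorm' (x0 - c) ^ 2 := by
  simp_rw [sq_enorm'_kIter_one_sub, List.mem_ofFn', Set.mem_range, mul_sum]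
  rw [sum_comm, enorm', Real.sq_sqrt (by positivity), mul_sum]
  refine sum_congr rfl fun j _ => ?_
  have havoid := sum_ite_forall_ne_eq_pow j k
  rw [Fintype.card_fin] at havoid
  rw [Pi.sub_apply, ← havoid, sum_mul]
  refine sum_congr rfl fun f _ => ?_
  rcases em (∃ i, f i = j) with hf | hf <;> simp [hf]

lemma sum_enorm'_kIter_one_sub_le {n : ℕ} (hn : 0 < n) (c x0 : Fin n → ℝ) (k : ℕ) :
    ∑ f : Fin k → Fin n, (1 / n : ℝ) ^ k *
        enorm' (kIter (1 : Matrix (Fin n) (Fin n) ℝ) c x0 (List.ofFn f) - c)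
      ≤ √((1 - 1 / n : ℝ) ^ k) * enorm' (x0 - c) := by
  have : Nonempty (Fin n) := ⟨⟨0, hn⟩⟩
  have hjensen := sum_mul_sqrt_le_sqrt_sum_mul univ (fun _ => (1 / n : ℝ) ^ k)
    (fun f => enorm' (kIter 1 c x0 (List.ofFn f) - c) ^ 2) (fun _ _ => by positivity)
    (by simpa using sum_pi_inv_card_pow (α := Fin n) k) (fun _ _ => by positivity)
  simp_rw [Real.sqrt_sq (enorm'_nonneg _)] at hjensen
  rwa [sum_sq_enorm'_kIter_one_sub, Real.sqrt_mul' _ (sq_nonneg _),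
    Real.sqrt_sq (enorm'_nonneg _)] at hjensen

lemma enorm'_sub_le_sum_enorm'_kIter_one {n : ℕ} (hn : 0 < n) (c x0 : Fin n → ℝ) (k : ℕ) :
    enorm' c - √((1 - 1 / n : ℝ) ^ k) * enorm' (x0 - c)
      ≤ ∑ f : Fin k → Fin n, (1 / n : ℝ) ^ k *
          enorm' (kIter (1 : Matrix (Fin n) (Fin n) ℝ) c x0 (List.ofFn f)) := by
  have : Nonempty (Fin n) := ⟨⟨0, hn⟩⟩
  have hweights : ∑ _f : Fin k → Fin n, (1 / n : ℝ) ^ k = 1 := by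
    simpa using sum_pi_inv_card_pow (α := Fin n) k
  calc enorm' c - √((1 - 1 / n : ℝ) ^ k) * enorm' (x0 - c)
      ≤ ∑ f : Fin k → Fin n, (1 / n : ℝ) ^ k * enorm' c
          - ∑ f : Fin k → Fin n, (1 / n : ℝ) ^ k *
            enorm' (kIter (1 : Matrix (Fin n) (Fin n) ℝ) c x0 (List.ofFn f) - c) := by
        rw [← sum_mul, hweights, one_mul]
        linarith [sum_enorm'_kIter_one_sub_le hn c x0 k]
    _ ≤ _ := by
        rw [← sum_sub_distrib]
        refine sum_le_sum fun f _ => ?_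
        rw [← mul_sub]
        gcongr
        linarith [enorm'_le_enorm'_add_enorm'_sub (kIter 1 c x0 (List.ofFn f)) c]

/-- Sharpness example: for `A = Iₙ`, `b = 0`, `x = 0`, `r = (1,…,1)`, the expected
error of noisy randomized Kaczmarz is at least `√n - (1 - 1/n)^{k/2} ‖x₀ - r‖`. -/
theorem stmt_11 (n : ℕ) (hn : 0 < n) (x0 : Fin n → ℝ) (k : ℕ) :
    Real.sqrt n - Real.sqrt ((1 - 1 / (n : ℝ)) ^ k) * enorm' (x0 - fun _ => (1 : ℝ)) ≤
      ∑ f : Fin k → Fin n, ((1 : ℝ) / n) ^ k *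
        enorm' (kIter (1 : Matrix (Fin n) (Fin n) ℝ) (fun _ => (1 : ℝ)) x0 (List.ofFn f)
          - (0 : Fin n → ℝ)) := by
  have hnorm : enorm' (fun _ => (1 : ℝ) : Fin n → ℝ) = √n := by simp [enorm']
  simpa only [hnorm, sub_zero] using enorm'_sub_le_sum_enorm'_kIter_one hn (fun _ => 1) x0 k
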